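/- arXiv:1801.02071 — 2 statements merged into one kernel-verified Lean document; each statement's English description precedes it below -/
import Mathlib

section
/- Let L = V ⊕ W be a color gLt-algebra admitting a μ-quasi-multiplicative basis {e_i}_{i∈I} of W ≠ 0, with V tight. Then L is minimal (its only nonzero color gLt-ideal admitting a basis inherited from that of L is L itself) if and only if all elements of I are connected (the connection relation on I has a single equivalence class). -/
set_option maxHeartbeats 1000000

/-- A (color) generalized Lie-type algebra: an `(n+2)`-ary `G`-graded algebra with
bicharacter `epsilon` satisfying the (colored) generalized Lie-type identities with
structure constants `alpha` (allowed to depend on the degrees of the arguments). -/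
structure ColorGLT (F : Type) [Field F] (G : Type) [AddCommGroup G] [DecidableEq G]
    (L : Type) [AddCommGroup L] [Module F L] (n : ℕ) where
  bracket : MultilinearMap F (fun _ : Fin (n + 2) => L) L
  grading : G → Submodule F L
  isInternal : DirectSum.IsInternal grading
  bracket_graded : ∀ (g : Fin (n + 2) → G) (x : Fin (n + 2) → L),
    (∀ t, x t ∈ grading (g t)) → bracket x ∈ grading (∑ t, g t)
  epsilon : G → G → F
  epsilon_ne_zero : ∀ g h, epsilon g h ≠ 0
  epsilon_add_left : ∀ g h k, epsilon (g + h) k = epsilon g k * epsilon h k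
  epsilon_add_right : ∀ g h k, epsilon k (g + h) = epsilon k g * epsilon k h
  epsilon_skew : ∀ g h, epsilon g h * epsilon h g = 1
  alpha : Fin (n + 2) → Fin (n + 2) → Fin (n + 2) → Equiv.Perm (Fin (n + 2)) →
      Equiv.Perm (Fin (n + 1)) → (Fin (n + 2) → G) → (Fin (n + 1) → G) → F
  glt : ∀ (k : Fin (n + 2)) (gx : Fin (n + 2) → G) (gy : Fin (n + 1) → G)
      (x : Fin (n + 2) → L) (y : Fin (n + 1) → L),
      (∀ t, x t ∈ grading (gx t)) → (∀ t, y t ∈ grading (gy t)) →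
      bracket (Fin.insertNth k (bracket x) y) =
        ∑ i : Fin (n + 2), ∑ j : Fin (n + 2), ∑ σ₁ : Equiv.Perm (Fin (n + 2)),
          ∑ σ₂ : Equiv.Perm (Fin (n + 1)),
            alpha i j k σ₁ σ₂ gx gy •
              bracket (Function.update (fun t => x (σ₁ t)) i
                (bracket (Fin.insertNth j (x (σ₁ i)) (fun t => y (σ₂ t)))))

namespace ColorGLT

variable {F : Type} [Field F] {G : Type} [AddCommGroup G] [DecidableEq G]
    {L : Type} [AddCommGroup L] [Module F L] {n : ℕ}

/-- A color gLt-ideal: a graded subspace `S` with `⟨S, L, …, L⟩_σ ⊆ S` for all `σ ∈ Sₙ`. -/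
def IsIdeal (A : ColorGLT F G L n) (S : Submodule F L) : Prop :=
  (S = ⨆ g : G, S ⊓ A.grading g) ∧
  ∀ (σ : Equiv.Perm (Fin (n + 2))) (x : Fin (n + 2) → L),
    x 0 ∈ S → A.bracket (fun t => x (σ t)) ∈ S

/-- `L` is centerless: `Z(L) = {x : ⟨x, L, …, L⟩_σ = 0 ∀ σ} = 0`. -/
def Centerless (A : ColorGLT F G L n) : Prop :=
  ∀ x : L, (∀ (σ : Equiv.Perm (Fin (n + 2))) (y : Fin (n + 2) → L),
    y 0 = x → A.bracket (fun t => y (σ t)) = 0) → x = 0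

end ColorGLT

/-- A quasi-multiplicative basis of a color gLt-algebra: `L = V ⊕ W`, with a homogeneous
basis `{e i}` of `W ≠ 0` satisfying the three quasi-multiplicativity conditions. -/
structure QMBasis {F : Type} [Field F] {G : Type} [AddCommGroup G] [DecidableEq G]
    {L : Type} [AddCommGroup L] [Module F L] {n : ℕ}
    (A : ColorGLT F G L n) (I : Type) where
  V : Submodule F L
  W : Submodule F L
  compl : IsCompl V W
  W_ne_bot : W ≠ ⊥
  V_graded : V = ⨆ g : G, V ⊓ A.grading g
  W_graded : W = ⨆ g : G, W ⊓ A.grading g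
  e : I → L
  deg : I → G
  e_homog : ∀ i, e i ∈ A.grading (deg i)
  e_indep : LinearIndependent F e
  e_span : Submodule.span F (Set.range e) = W
  qm1 : ∀ c : Fin (n + 2) → I,
    (∃ j, A.bracket (fun t => e (c t)) ∈ Submodule.span F {e j}) ∨
      A.bracket (fun t => e (c t)) ∈ V
  qm2 : ∀ (σ : Equiv.Perm (Fin (n + 2))) (S : Finset (Fin (n + 2))),
    S.Nonempty → S ≠ Finset.univ → ∀ ind : Fin (n + 2) → I, ∃ j : I,
      ∀ x : Fin (n + 2) → L, (∀ t, t ∈ S → x t = e (ind t)) →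
        (∀ t, t ∉ S → x t ∈ V) →
        A.bracket (fun t => x (σ t)) ∈ Submodule.span F {e j}
  qm3 : (∃ j, ∀ x : Fin (n + 2) → L, (∀ t, x t ∈ V) →
          A.bracket x ∈ Submodule.span F {e j}) ∨
        (∀ x : Fin (n + 2) → L, (∀ t, x t ∈ V) → A.bracket x ∈ V)

namespace QMBasis

variable {F : Type} [Field F] {G : Type} [AddCommGroup G] [DecidableEq G]
    {L : Type} [AddCommGroup L] [Module F L] {n : ℕ} {I : Type}
    {A : ColorGLT F G L n}

/-- The set of elements represented by an index of `𝔉 = I ∪ {v}`: `e i` for `some i`,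
the subspace `V` for `none` (= `v`). -/
def elemSet (B : QMBasis A I) : Option I → Set L
  | none => (B.V : Set L)
  | some i => {B.e i}

/-- The target set of an index of `𝔉`: the line `𝔽 e j` for `some j`, `V` for `v`. -/
def targetSet (B : QMBasis A I) : Option I → Set L
  | none => (B.V : Set L)
  | some j => (Submodule.span F {B.e j} : Set L)

/-- `x ∈ a_σ(c)`: the `σ`-permuted product of the elements represented by `c` is nonzero
and lands in the target represented by `x`; the value `v` is only allowed for all-basis
or all-`V` tuples. -/
def aMem (B : QMBasis A I) (σ : Equiv.Perm (Fin (n + 2)))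
    (c : Fin (n + 2) → Option I) (x : Option I) : Prop :=
  (∃ z : Fin (n + 2) → L, (∀ t, z t ∈ B.elemSet (c (σ t))) ∧ A.bracket z ≠ 0) ∧
  (∀ z : Fin (n + 2) → L, (∀ t, z t ∈ B.elemSet (c (σ t))) → A.bracket z ∈ B.targetSet x) ∧
  (x = none → ((∀ t, (c t).isSome = true) ∨ (∀ t, c t = none)))

/-- An admissible `(n+1)`-tuple over `𝔉 ∪ 𝔉̄`: all entries barred (`true`) or all
unbarred (`false`). -/
abbrev Tup (I : Type) (n : ℕ) := Bool × (Fin (n + 1) → Option I)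

/-- `x ∈ μ(j, X)` where `j ∈ 𝔉 ∪ 𝔉̄` (left = unbarred, right = barred) and `X` is an
admissible tuple; defined via `a_σ` and `b_σ` as in the paper. -/
def muMem (B : QMBasis A I) :
    Option I ⊕ Option I → Tup I n → Option I → Prop
  | Sum.inl j, (false, c), x => ∃ σ : Equiv.Perm (Fin (n + 2)), B.aMem σ (Fin.cons j c) x
  | Sum.inl j, (true, c), x => ∃ σ : Equiv.Perm (Fin (n + 2)), B.aMem σ (Fin.cons x c) j
  | Sum.inr j, (false, c), x =>
      ∃ (k : Fin (n + 1)) (σ : Equiv.Perm (Fin (n + 2))),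
        B.aMem σ (Fin.cons x (Fin.cons j (fun t => c (k.succAbove t)))) (c k)
  | Sum.inr _, (true, _), _ => False

/-- The map `φ : P(I ∪ Ī) × T → P(I ∪ Ī)`, `φ(J, X) = K ∪ K̄` with
`K = (⋃_{j ∈ J} μ(j, X)) \ {v}` (left = `I`, right = `Ī`). -/
def phi (B : QMBasis A I) (J : Set (I ⊕ I)) (X : Tup I n) : Set (I ⊕ I) :=
  {p | ∃ i : I, (p = Sum.inl i ∨ p = Sum.inr i) ∧
    ∃ j ∈ J, B.muMem (Sum.map some some j) X (some i)}

/-- Iterated application of `φ` along a list of tuples. -/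
def chain (B : QMBasis A I) : Set (I ⊕ I) → List (Tup I n) → Set (I ⊕ I)
  | s, [] => s
  | s, X :: r => chain B (B.phi s X) r

/-- The connection relation: `i` is connected to `j`. -/
def Connected (B : QMBasis A I) (i j : I) : Prop :=
  i = j ∨ ∃ (Xs : List (Tup I n)) (st : I ⊕ I),
    Xs ≠ [] ∧ (st = Sum.inl i ∨ st = Sum.inr i) ∧
    (∀ m, m < Xs.length → (chain B {st} (List.take m Xs)).Nonempty) ∧
    Sum.inl j ∈ chain B {st} Xs

/-- The connection class `[i]` of `i`. -/
def cls (B : QMBasis A I) (i : I) : Set I := {j | B.Connected i j}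

/-- `W_{[i]} = ⊕_{j ∈ [i]} 𝔽 e_j`. -/
def Wcls (B : QMBasis A I) (i : I) : Submodule F L :=
  Submodule.span F (B.e '' B.cls i)

/-- `V_{[i]} = (Σ_{i₁,…,iₙ ∈ [i]} 𝔽⟨e_{i₁},…,e_{iₙ}⟩) ∩ V`. -/
def Vcls (B : QMBasis A I) (i : I) : Submodule F L :=
  Submodule.span F {z : L | ∃ c : Fin (n + 2) → I,
    (∀ t, c t ∈ B.cls i) ∧ z = A.bracket (fun t => B.e (c t))} ⊓ B.V

/-- `𝔍_{[i]} = V_{[i]} ⊕ W_{[i]}`. -/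
def Jcls (B : QMBasis A I) (i : I) : Submodule F L := B.Vcls i ⊔ B.Wcls i

/-- `S` admits a quasi-multiplicative basis inherited from that of `L`:
`S = V_S ⊕ W_S` with `V_S ⊆ V` and `W_S ≠ 0` spanned by a subset of the `e i`. -/
def HasInheritedBasis (B : QMBasis A I) (S : Submodule F L) : Prop :=
  ∃ (V' : Submodule F L) (J' : Set I), V' ≤ B.V ∧ J'.Nonempty ∧
    S = V' ⊔ Submodule.span F (B.e '' J')

/-- `V` is tight: `V = 0` or `V = Σ_{μ(i₁,…,iₙ) = {v}} 𝔽⟨e_{i₁},…,e_{iₙ}⟩`. -/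
def Tight (B : QMBasis A I) : Prop :=
  B.V = ⊥ ∨
    B.V = Submodule.span F {z : L | ∃ c : Fin (n + 2) → I,
      ({x : Option I | ∃ σ, B.aMem σ (fun t => some (c t)) x} = {none}) ∧
      z = A.bracket (fun t => B.e (c t))}

/-- The set of elements represented by `u_{k}`: `u_k = e_k + e_{k̄}` (`= e` of the
underlying index, since `e_{j̄} = 0`) if `k ∉ {v, v̄}`, and `u_k = V` otherwise. -/
def uSet (B : QMBasis A I) : Option I ⊕ Option I → Set L
  | Sum.inl none => (B.V : Set L)
  | Sum.inr none => (B.V : Set L)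
  | Sum.inl (some i) => {B.e i}
  | Sum.inr (some i) => {B.e i}

/-- The full `(n+2)`-tuple `(k₁, …, kₙ)` over `𝔉 ∪ 𝔉̄` obtained from a first entry and
an admissible tuple. -/
def fullTup {I : Type} {n : ℕ} (k₁ : Option I ⊕ Option I) (X : Tup I n) :
    Fin (n + 2) → Option I ⊕ Option I :=
  Fin.cons k₁ (fun t => if X.1 then Sum.inr (X.2 t) else Sum.inl (X.2 t))

/-- The basis is `μ`-quasi-multiplicative: whenever `i ∈ μ(k₁, …, kₙ)` then
`e i ∈ 𝔽⟨u_{k₁}, …, u_{kₙ}⟩_σ` for some `σ ∈ Sₙ`. -/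
def MuQM (B : QMBasis A I) : Prop :=
  ∀ (k₁ : Option I ⊕ Option I) (X : Tup I n) (i : I),
    B.muMem k₁ X (some i) →
    ∃ (σ : Equiv.Perm (Fin (n + 2))) (z : Fin (n + 2) → L),
      (∀ t, z t ∈ B.uSet (fullTup k₁ X (σ t))) ∧
      B.e i ∈ Submodule.span F {A.bracket z}

end QMBasis

/-
For each `i`, the subspace `𝔍_{[i]} = V_{[i]} ⊕ W_{[i]}` is a graded ideal with a basis inherited
from `{e_j}`. Expanding the other factors multilinearly along `L = V ⊕ span {e_j}`, a product with
a factor `e_j`, `j ∈ [i]`, becomes a sum of products of basis vectors and elements of `V`; by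
quasi-multiplicativity each lies either in `𝔽 e_m` with `m` connected to `j`, or in `V` with all
its factors connected to `j`. A factor taken from `V_{[i]}` is reduced to this case by the gLt
identity. So if `L` is minimal then `𝔍_{[i]} = L`, and linear independence of the `e_j` puts
every `j` in `[i]`.

Conversely, `μ`-quasi-multiplicativity says that each step of a connection starting at `i₀`
produces `e_i` as a multiple of a product with a factor already in the ideal; so an inherited
ideal, which contains some `e_{i₀}`, contains `W`, and then `V` by tightness.
-/

namespace MultilinearMap

variable {R ι M N : Type*} [Semiring R] [AddCommMonoid M] [Module R M]
  [AddCommMonoid N] [Module R N] [DecidableEq ι]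

theorem map_update_mem_of_mem_span (f : MultilinearMap R (fun _ : ι => M) N)
    {S : Submodule R N} {T : Set M} (z : ι → M) (t : ι)
    (hT : ∀ x ∈ T, f (Function.update z t x) ∈ S) {x : M} (hx : x ∈ Submodule.span R T) :
    f (Function.update z t x) ∈ S :=
  (Submodule.span_le (p := S.comap (f.toLinearMap z t)) |>.2 hT) hx

theorem map_mem_of_forall_mem_span [Fintype ι] (f : MultilinearMap R (fun _ : ι => M) N)
    {S : Submodule R N} (T : ι → Set M) (hT : ∀ w : ι → M, (∀ t, w t ∈ T t) → f w ∈ S)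
    {z : ι → M} (hz : ∀ t, z t ∈ Submodule.span R (T t)) : f z ∈ S := by
  suffices ∀ (s : Finset ι) (z : ι → M), (∀ t, z t ∈ Submodule.span R (T t)) →
      (∀ t ∉ s, z t ∈ T t) → f z ∈ S from
    this Finset.univ z hz fun t ht => absurd (Finset.mem_univ t) ht
  intro s
  induction s using Finset.induction_on with
  | empty => exact fun z _ hz => hT z fun t => hz t (Finset.notMem_empty t)
  | @insert a s ha ih =>
    intro z hspan hz
    rw [← Function.update_eq_self a z]
    refine f.map_update_mem_of_mem_span z a
      (fun x hx => ih _ (fun t => ?_) fun t ht => ?_) (hspan a)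
    · rcases eq_or_ne t a with rfl | hta
      · simpa using Submodule.subset_span hx
      · simpa [hta] using hspan t
    · rcases eq_or_ne t a with rfl | hta
      · simpa using hx
      · simpa [hta] using hz t (by simp [hta, ht])

end MultilinearMap

namespace Submodule

variable {R ι M : Type*} [Semiring R] [AddCommMonoid M] [Module R M] (𝒜 : ι → Submodule R M)

theorem span_le_iSup_inf {T : Set M} (hT : ∀ x ∈ T, ∃ i, x ∈ 𝒜 i) :
    span R T ≤ ⨆ i, span R T ⊓ 𝒜 i :=
  span_le.2 fun x hx =>
    let ⟨i, hi⟩ := hT x hx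
    le_iSup (fun i => span R T ⊓ 𝒜 i) i ⟨subset_span hx, hi⟩

theorem sup_le_iSup_inf {S T : Submodule R M} (hS : S ≤ ⨆ i, S ⊓ 𝒜 i)
    (hT : T ≤ ⨆ i, T ⊓ 𝒜 i) : S ⊔ T ≤ ⨆ i, (S ⊔ T) ⊓ 𝒜 i :=
  sup_le (hS.trans (iSup_mono fun _ => inf_le_inf_right _ le_sup_left))
    (hT.trans (iSup_mono fun _ => inf_le_inf_right _ le_sup_right))

variable [DecidableEq ι] [DirectSum.Decomposition 𝒜]

theorem isHomogeneous_of_le_iSup_inf {S : Submodule R M} (hS : S ≤ ⨆ i, S ⊓ 𝒜 i) :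
    DirectSum.SetLike.IsHomogeneous 𝒜 S := by
  intro i x hx
  refine iSup_induction _ (motive := fun x => (DirectSum.decompose 𝒜 x i : M) ∈ S) (hS hx)
    (fun j y hy => ?_) (by simp) fun y y' hy hy' => by simpa using add_mem hy hy'
  rcases eq_or_ne j i with rfl | hji
  · simpa [DirectSum.decompose_of_mem_same 𝒜 hy.2] using hy.1
  · simp [DirectSum.decompose_of_mem_ne 𝒜 hy.2 hji]

theorem le_iSup_inf_of_isHomogeneous {S : Submodule R M}
    (hS : DirectSum.SetLike.IsHomogeneous 𝒜 S) : S ≤ ⨆ i, S ⊓ 𝒜 i := by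
  classical
  intro x hx
  rw [← DirectSum.sum_support_decompose 𝒜 x]
  exact sum_mem fun i _ =>
    le_iSup (fun i => S ⊓ 𝒜 i) i ⟨hS i hx, (DirectSum.decompose 𝒜 x i).2⟩

theorem inf_le_iSup_inf {S T : Submodule R M} (hS : S ≤ ⨆ i, S ⊓ 𝒜 i)
    (hT : T ≤ ⨆ i, T ⊓ 𝒜 i) : S ⊓ T ≤ ⨆ i, (S ⊓ T) ⊓ 𝒜 i :=
  le_iSup_inf_of_isHomogeneous 𝒜 fun i _ hx =>
    ⟨isHomogeneous_of_le_iSup_inf 𝒜 hS i hx.1, isHomogeneous_of_le_iSup_inf 𝒜 hT i hx.2⟩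

end Submodule

theorem Fin.exists_perm_apply_zero_apply_one {n : ℕ} {a b : Fin (n + 2)} (hab : a ≠ b) :
    ∃ π : Equiv.Perm (Fin (n + 2)), π 0 = a ∧ π 1 = b := by
  refine ⟨Equiv.swap 0 a * Equiv.swap 1 (Equiv.swap 0 a b), ?_, by simp⟩
  have h : Equiv.swap 0 a b ≠ 0 := by
    rw [Ne, Equiv.swap_apply_eq_iff, Equiv.swap_apply_left]; exact hab.symm
  simp [Equiv.swap_apply_of_ne_of_ne Fin.zero_ne_one h.symm]

theorem ColorGLT.IsIdeal.bracket_mem {F : Type} [Field F] {G : Type} [AddCommGroup G]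
    [DecidableEq G] {L : Type} [AddCommGroup L] [Module F L] {n : ℕ} {A : ColorGLT F G L n}
    {S : Submodule F L} (hS : A.IsIdeal S) {z : Fin (n + 2) → L} {t₀ : Fin (n + 2)}
    (hz : z t₀ ∈ S) : A.bracket z ∈ S := by
  simpa using hS.2 (Equiv.swap 0 t₀) (fun t => z (Equiv.swap 0 t₀ t)) (by simpa using hz)

namespace QMBasis

variable {F : Type} [Field F] {G : Type} [AddCommGroup G] [DecidableEq G]
    {L : Type} [AddCommGroup L] [Module F L] {n : ℕ} {I : Type}
    {A : ColorGLT F G L n} {B : QMBasis A I}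

theorem chain_mono {s s' : Set (I ⊕ I)} (h : s ⊆ s') (Xs : List (Tup I n)) :
    B.chain s Xs ⊆ B.chain s' Xs := by
  induction Xs generalizing s s' with
  | nil => exact h
  | cons X r ih => exact ih fun _ ⟨i, hp, j, hj, hm⟩ => ⟨i, hp, j, h hj, hm⟩

theorem chain_append (s : Set (I ⊕ I)) (Xs Ys : List (Tup I n)) :
    B.chain s (Xs ++ Ys) = B.chain (B.chain s Xs) Ys := by
  induction Xs generalizing s with
  | nil => rfl
  | cons X r ih => exact ih (B.phi s X)

theorem inr_mem_chain_of_inl_mem {s : Set (I ⊕ I)} {Xs : List (Tup I n)} (hXs : Xs ≠ [])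
    {i : I} (h : Sum.inl i ∈ B.chain s Xs) : Sum.inr i ∈ B.chain s Xs := by
  induction Xs generalizing s with
  | nil => exact absurd rfl hXs
  | cons X r ih =>
    rcases r with - | ⟨Y, r⟩
    · obtain ⟨i', hp, hm⟩ := h
      obtain rfl : i = i' := by simpa using hp
      exact ⟨i, Or.inr rfl, hm⟩
    · exact ih (List.cons_ne_nil Y r) h

theorem Connected.trans {i j k : I} (hij : B.Connected i j) (hjk : B.Connected j k) :
    B.Connected i k := by
  rcases hij with rfl | ⟨Xs, st, hXs, hst, hne, hmem⟩
  · exact hjk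
  rcases hjk with rfl | ⟨Ys, st', hYs, hst', hne', hmem'⟩
  · exact Or.inr ⟨Xs, st, hXs, hst, hne, hmem⟩
  have hst'_mem : {st'} ⊆ B.chain {st} Xs := by
    rcases hst' with rfl | rfl
    · simpa using hmem
    · simpa using inr_mem_chain_of_inl_mem hXs hmem
  refine Or.inr ⟨Xs ++ Ys, st, by simp [hXs], hst, fun m hm => ?_, ?_⟩
  · rcases lt_or_ge m Xs.length with hlt | hle
    · rw [List.take_append_of_le_length hlt.le]
      exact hne m hlt
    · rw [List.take_append, List.take_of_length_le hle, chain_append]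
      exact (hne' (m - Xs.length) (by simp at hm; omega)).mono (chain_mono hst'_mem _)
  · rw [chain_append]
    exact chain_mono hst'_mem Ys hmem'

theorem connected_of_muMem {i j : I} {st : I ⊕ I} (hst : st = Sum.inl i ∨ st = Sum.inr i)
    {X : Tup I n} (h : B.muMem (Sum.map some some st) X (some j)) : B.Connected i j :=
  Or.inr ⟨[X], st, List.cons_ne_nil X [], hst, fun m hm => by
    obtain rfl : m = 0 := by simpa using hm
    exact ⟨st, rfl⟩, ⟨j, Or.inl rfl, st, rfl, h⟩⟩

theorem aMem.comp_perm {σ : Equiv.Perm (Fin (n + 2))} {c : Fin (n + 2) → Option I}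
    {x : Option I} (h : B.aMem σ c x) (π : Equiv.Perm (Fin (n + 2))) :
    B.aMem (σ.trans π.symm) (fun t => c (π t)) x := by
  obtain ⟨hne, htar, hv⟩ := h
  refine ⟨by simpa using hne, by simpa using htar, fun hx => ?_⟩
  rcases hv hx with h | h
  exacts [Or.inl fun t => h (π t), Or.inr fun t => h (π t)]

theorem connected_of_aMem {σ : Equiv.Perm (Fin (n + 2))} {c : Fin (n + 2) → Option I}
    {j : I} (h : B.aMem σ c (some j)) {t₀ : Fin (n + 2)} {i : I} (hi : c t₀ = some i) :
    B.Connected i j := by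
  set c' : Fin (n + 2) → Option I := fun t => c (Equiv.swap 0 t₀ t)
  have hc' : Fin.cons (some i) (Fin.tail c') = c' := by
    rw [← Fin.cons_self_tail c']
    simp [c', hi]
  refine connected_of_muMem (st := Sum.inl i) (X := (false, Fin.tail c')) (Or.inl rfl) ?_
  refine ⟨σ.trans (Equiv.swap 0 t₀).symm, ?_⟩
  simpa [hc'] using h.comp_perm (Equiv.swap 0 t₀)

-- The barred step: `j ∈ μ(ī, X)`, where `X` lists the target `x` and the other entries of `c`.
theorem connected_of_aMem_of_ne {σ : Equiv.Perm (Fin (n + 2))} {c : Fin (n + 2) → Option I}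
    {x : Option I} (h : B.aMem σ c x) {t₀ t₁ : Fin (n + 2)} (ht : t₀ ≠ t₁) {i j : I}
    (hi : c t₀ = some i) (hj : c t₁ = some j) : B.Connected i j := by
  obtain ⟨π, hπ0, hπ1⟩ := Fin.exists_perm_apply_zero_apply_one ht.symm
  set c' : Fin (n + 2) → Option I := fun t => c (π t)
  have hc' : Fin.cons (some j) (Fin.cons (some i) fun s => c' s.succ.succ) = c' := by
    funext t
    refine Fin.cases ?_ (Fin.cases ?_ fun s => ?_) t
    · simp [c', hπ0, hj]
    · simp [c', hπ1, hi]
    · simp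
  refine connected_of_muMem (st := Sum.inr i) (Or.inr rfl)
    (X := (false, Fin.cons x fun s => c' s.succ.succ)) ?_
  refine ⟨0, σ.trans π.symm, ?_⟩
  simpa [hc'] using h.comp_perm π

theorem e_mem_of_mem_chain (hmu : B.MuQM) {S : Submodule F L} (hS : A.IsIdeal S)
    (Xs : List (Tup I n)) {s : Set (I ⊕ I)} (hs : ∀ p ∈ s, B.e (p.elim id id) ∈ S) :
    ∀ p ∈ B.chain s Xs, B.e (p.elim id id) ∈ S := by
  induction Xs generalizing s with
  | nil => exact hs
  | cons X r ih =>
    refine ih fun p ⟨i, hp, j, hj, hm⟩ => ?_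
    obtain ⟨σ, z, hz, hei⟩ := hmu _ X i hm
    have hzj : z (σ.symm 0) ∈ S := by
      have h0 : z (σ.symm 0) = B.e (j.elim id id) := by
        have := hz (σ.symm 0)
        rcases j with j | j <;> simpa [fullTup, uSet] using this
      exact h0 ▸ hs j hj
    have hei : B.e i ∈ S :=
      (Submodule.span_singleton_le_iff_mem _ _).2 (hS.bracket_mem hzj) hei
    rcases hp with rfl | rfl <;> exact hei

theorem eq_top_of_forall_connected (hmu : B.MuQM) (ht : B.Tight)
    (hconn : ∀ i j : I, B.Connected i j) {S : Submodule F L} (hS : A.IsIdeal S)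
    (hSB : B.HasInheritedBasis S) : S = ⊤ := by
  obtain ⟨V', J', -, ⟨i₀, hi₀⟩, rfl⟩ := hSB
  have he₀ : B.e i₀ ∈ V' ⊔ Submodule.span F (B.e '' J') :=
    Submodule.mem_sup_right (Submodule.subset_span ⟨i₀, hi₀, rfl⟩)
  have he : ∀ j, B.e j ∈ V' ⊔ Submodule.span F (B.e '' J') := fun j => by
    rcases hconn i₀ j with rfl | ⟨Xs, st, -, hst, -, hmem⟩
    · exact he₀
    · refine e_mem_of_mem_chain hmu hS Xs (fun p hp => ?_) _ hmem
      rcases hst with rfl | rfl <;> simpa [Set.mem_singleton_iff.1 hp] using he₀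
  have hW : B.W ≤ V' ⊔ Submodule.span F (B.e '' J') := by
    rw [← B.e_span, Submodule.span_le]
    rintro _ ⟨j, rfl⟩
    exact he j
  have hV : B.V ≤ V' ⊔ Submodule.span F (B.e '' J') := by
    rcases ht with h | h
    · exact h ▸ bot_le
    · rw [h, Submodule.span_le]
      rintro _ ⟨c, -, rfl⟩
      exact hS.bracket_mem (t₀ := 0) (he (c 0))
  rw [eq_top_iff, ← B.compl.sup_eq_top]
  exact sup_le hV hW

variable (B) in
theorem span_iUnion_elemSet : Submodule.span F (⋃ o, B.elemSet o) = ⊤ := by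
  refine eq_top_iff.2 ?_
  rw [← B.compl.sup_eq_top, ← B.e_span]
  refine sup_le ((Set.subset_iUnion B.elemSet none).trans Submodule.subset_span) ?_
  exact Submodule.span_mono (Set.range_subset_iff.2 fun i => Set.mem_iUnion.2 ⟨some i, rfl⟩)

theorem exists_aMem_one {c : Fin (n + 2) → Option I} {t₀ : Fin (n + 2)} {i : I}
    (hc : c t₀ = some i) {z : Fin (n + 2) → L} (hz : ∀ t, z t ∈ B.elemSet (c t))
    (hne : A.bracket z ≠ 0) : ∃ x, B.aMem 1 c x := by
  classical
  set d : Fin (n + 2) → I := fun t => (c t).getD i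
  by_cases hall : ∀ t, (c t).isSome
  · have hcd : ∀ t, c t = some (d t) := fun t => by
      obtain ⟨k, hk⟩ := Option.isSome_iff_exists.1 (hall t)
      simp [d, hk]
    have hunique : ∀ w : Fin (n + 2) → L, (∀ t, w t ∈ B.elemSet (c t)) →
        w = fun t => B.e (d t) := fun w hw => funext fun t => by
      simpa [hcd, elemSet] using hw t
    rcases B.qm1 d with ⟨m, hm⟩ | hV
    · exact ⟨some m, ⟨z, by simpa using hz, hne⟩,
        fun w hw => hunique w (by simpa using hw) ▸ hm, by simp⟩
    · exact ⟨none, ⟨z, by simpa using hz, hne⟩,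
        fun w hw => hunique w (by simpa using hw) ▸ hV, fun _ => Or.inl hall⟩
  · set s := Finset.univ.filter fun t => (c t).isSome
    have hsu : s ≠ Finset.univ := fun h => hall fun t => by
      have ht : t ∈ s := h ▸ Finset.mem_univ t
      simpa [s] using ht
    obtain ⟨m, hm⟩ := B.qm2 1 s ⟨t₀, by simp [s, hc]⟩ hsu d
    refine ⟨some m, ⟨z, by simpa using hz, hne⟩, fun w hw => ?_, by simp⟩
    have hwS : ∀ t ∈ s, w t = B.e (d t) := fun t ht => by
      obtain ⟨k, hk⟩ := Option.isSome_iff_exists.1 (by simpa [s] using ht)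
      simpa [hk, d, elemSet] using hw t
    have hwV : ∀ t ∉ s, w t ∈ B.V := fun t ht => by
      simpa [s, elemSet, Option.not_isSome_iff_eq_none.1 (by simpa [s] using ht)] using hw t
    simpa [targetSet] using hm w hwS hwV

theorem e_mem_Wcls {i j : I} (hij : B.Connected i j) : B.e j ∈ B.Wcls i :=
  Submodule.subset_span ⟨j, hij, rfl⟩

theorem bracket_mem_Jcls_of_forall_mem_elemSet {i j : I} (hij : B.Connected i j)
    {c : Fin (n + 2) → Option I} {t₀ : Fin (n + 2)} (hc : c t₀ = some j)
    {z : Fin (n + 2) → L} (hz : ∀ t, z t ∈ B.elemSet (c t)) : A.bracket z ∈ B.Jcls i := by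
  by_cases hne : A.bracket z = 0
  · exact hne ▸ zero_mem _
  obtain ⟨x, hx⟩ := exists_aMem_one hc hz hne
  have hzx : A.bracket z ∈ B.targetSet x := hx.2.1 z (by simpa using hz)
  rcases x with - | m
  · have hall : ∀ t, ∃ k, c t = some k := fun t =>
      Option.isSome_iff_exists.1 <| ((hx.2.2 rfl).resolve_right fun h => by simp [h t₀] at hc) t
    choose d hd using hall
    have hcls : ∀ t, d t ∈ B.cls i := fun t => by
      rcases eq_or_ne t t₀ with rfl | ht
      · obtain rfl : d t = j := by simpa [hd t] using hc
        exact hij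
      · exact hij.trans (connected_of_aMem_of_ne hx ht.symm hc (hd t))
    have hz' : z = fun t => B.e (d t) := funext fun t => by simpa [hd, elemSet] using hz t
    exact Submodule.mem_sup_left ⟨Submodule.subset_span ⟨d, hcls, hz' ▸ rfl⟩, hzx⟩
  · obtain ⟨a, ha⟩ := Submodule.mem_span_singleton.1 hzx
    exact Submodule.mem_sup_right
      (ha ▸ Submodule.smul_mem _ a (e_mem_Wcls (hij.trans (connected_of_aMem hx hc))))

theorem bracket_mem_Jcls_of_eq_e {i j : I} (hij : B.Connected i j) {z : Fin (n + 2) → L}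
    {t₀ : Fin (n + 2)} (hz : z t₀ = B.e j) : A.bracket z ∈ B.Jcls i := by
  classical
  refine A.bracket.map_mem_of_forall_mem_span
    (fun t => if t = t₀ then B.elemSet (some j) else ⋃ o, B.elemSet o)
    (fun w hw => ?_) fun t => ?_
  · have hc : ∀ t, ∃ o, w t ∈ B.elemSet o ∧ (t = t₀ → o = some j) := fun t => by
      by_cases ht : t = t₀
      · exact ⟨some j, by simpa [ht] using hw t, fun _ => rfl⟩
      · obtain ⟨o, ho⟩ := Set.mem_iUnion.1 (by simpa [ht] using hw t)
        exact ⟨o, ho, fun h => absurd h ht⟩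
    choose c hc hc₀ using hc
    exact bracket_mem_Jcls_of_forall_mem_elemSet hij (hc₀ t₀ rfl) hc
  · split_ifs with ht
    · exact Submodule.subset_span (by simp [elemSet, ht, hz])
    · simp [span_iUnion_elemSet]

theorem bracket_mem_Jcls_of_eq_bracket {i : I} {d : Fin (n + 2) → I} (hd : ∀ t, d t ∈ B.cls i)
    {z : Fin (n + 2) → L} {t₀ : Fin (n + 2)} (hz : z t₀ = A.bracket fun t => B.e (d t)) :
    A.bracket z ∈ B.Jcls i := by
  classical
  refine A.bracket.map_mem_of_forall_mem_span
    (fun t => if t = t₀ then {A.bracket fun t => B.e (d t)} else ⋃ g, (A.grading g : Set L))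
    (fun w hw => ?_) fun t => ?_
  · have hwt₀ : w t₀ = A.bracket fun t => B.e (d t) := by simpa using hw t₀
    have hhom : ∀ s, ∃ g, Fin.removeNth t₀ w s ∈ A.grading g := fun s => by
      simpa [Fin.succAbove_ne t₀ s, Fin.removeNth] using hw (t₀.succAbove s)
    choose gy hgy using hhom
    rw [← Fin.insertNth_self_removeNth t₀ w, hwt₀,
      A.glt t₀ _ gy _ _ (fun t => B.e_homog (d t)) hgy]
    refine Submodule.sum_mem _ fun i' _ => Submodule.sum_mem _ fun _ _ =>
      Submodule.sum_mem _ fun σ₁ _ => Submodule.sum_mem _ fun _ _ => Submodule.smul_mem _ _ ?_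
    obtain ⟨t₁, ht₁⟩ : ∃ t₁ : Fin (n + 2), t₁ ≠ i' := ⟨i'.succAbove 0, Fin.succAbove_ne i' 0⟩
    exact bracket_mem_Jcls_of_eq_e (hd (σ₁ t₁)) (Function.update_of_ne ht₁ _ _)
  · split_ifs with ht
    · exact Submodule.subset_span (by simp [ht, hz])
    · simp [Submodule.span_iUnion, A.isInternal.submodule_iSup_eq_top]

theorem bracket_mem_Jcls_of_mem {i : I} {z : Fin (n + 2) → L} {t₀ : Fin (n + 2)}
    (hz : z t₀ ∈ B.Jcls i) : A.bracket z ∈ B.Jcls i := by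
  classical
  have hspan : z t₀ ∈ Submodule.span F ({x | ∃ c : Fin (n + 2) → I,
      (∀ t, c t ∈ B.cls i) ∧ x = A.bracket fun t => B.e (c t)} ∪ B.e '' B.cls i) := by
    rw [Submodule.span_union]
    exact (sup_le_sup_right inf_le_left _ : B.Jcls i ≤ _) hz
  rw [← Function.update_eq_self t₀ z]
  refine A.bracket.map_update_mem_of_mem_span z t₀ ?_ hspan
  rintro _ (⟨d, hd, rfl⟩ | ⟨j, hj, rfl⟩)
  · exact bracket_mem_Jcls_of_eq_bracket hd (Function.update_self _ _ _)
  · exact bracket_mem_Jcls_of_eq_e hj (Function.update_self _ _ _)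

variable (B) in
theorem Jcls_le_iSup_inf (i : I) : B.Jcls i ≤ ⨆ g, B.Jcls i ⊓ A.grading g := by
  let _ : DirectSum.Decomposition A.grading := A.isInternal.chooseDecomposition
  refine Submodule.sup_le_iSup_inf _ (Submodule.inf_le_iSup_inf _
    (Submodule.span_le_iSup_inf _ ?_) B.V_graded.le) (Submodule.span_le_iSup_inf _ ?_)
  · rintro _ ⟨c, -, rfl⟩
    exact ⟨_, A.bracket_graded _ _ fun t => B.e_homog (c t)⟩
  · rintro _ ⟨j, -, rfl⟩
    exact ⟨_, B.e_homog j⟩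

variable (B) in
theorem isIdeal_Jcls (i : I) : A.IsIdeal (B.Jcls i) :=
  ⟨le_antisymm (B.Jcls_le_iSup_inf i) (iSup_le fun _ => inf_le_left), fun σ _ hx =>
    bracket_mem_Jcls_of_mem (t₀ := σ.symm 0) (by simpa using hx)⟩

theorem mem_cls_of_e_mem_Jcls {i j : I} (h : B.e j ∈ B.Jcls i) : j ∈ B.cls i := by
  have hWcls : B.Wcls i ≤ B.W := B.e_span ▸ Submodule.span_mono (Set.image_subset_range _ _)
  have hW : (B.V ⊔ B.Wcls i) ⊓ B.W = B.Wcls i := by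
    rw [sup_comm, sup_inf_assoc_of_le _ hWcls, B.compl.inf_eq_bot, sup_bot_eq]
  have hj : B.e j ∈ B.Wcls i := hW ▸ ⟨(sup_le_sup_right inf_le_right _ : B.Jcls i ≤ _) h,
    B.e_span ▸ Submodule.subset_span ⟨j, rfl⟩⟩
  by_contra hcon
  exact B.e_indep.notMem_span_image hcon hj

end QMBasis

theorem stmt11 {F : Type} [Field F] {G : Type} [AddCommGroup G] [DecidableEq G]
    {L : Type} [AddCommGroup L] [Module F L] {n : ℕ} {I : Type}
    {A : ColorGLT F G L n} (B : QMBasis A I) (hmu : B.MuQM) (ht : B.Tight) :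
    (∀ S : Submodule F L, S ≠ ⊥ → A.IsIdeal S → B.HasInheritedBasis S → S = ⊤) ↔
      ∀ i j : I, B.Connected i j := by
  refine ⟨fun hmin i j => QMBasis.mem_cls_of_e_mem_Jcls ?_, fun hconn S _ hS hSB =>
    QMBasis.eq_top_of_forall_connected hmu ht hconn hS hSB⟩
  have he : B.e i ∈ B.Jcls i := Submodule.mem_sup_right (QMBasis.e_mem_Wcls (Or.inl rfl))
  have hJ : B.Jcls i = ⊤ := hmin _ (fun h => B.e_indep.ne_zero i (by simpa [h] using he))
    (B.isIdeal_Jcls i) ⟨B.Vcls i, B.cls i, inf_le_right, ⟨i, Or.inl rfl⟩, rfl⟩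
  exact hJ ▸ Submodule.mem_top
end

section
/- Let L = V ⊕ W be a color gLt-algebra admitting a μ-quasi-multiplicative basis {e_i}_{i∈I} of W ≠ 0, and let 𝔍 be a nonzero color gLt-ideal of L admitting a basis inherited from {e_i}. If e_{i₀} ∈ 𝔍 for some i₀ ∈ I and i ∈ I is connected to i₀, then e_i ∈ 𝔍. Consequently, if all elements of I are connected and some e_{i₀} ∈ 𝔍, then W ⊆ 𝔍. -/
set_option maxHeartbeats 1000000

/-! If `i` arises from `j` in one step of `φ`, μ-quasi-multiplicativity puts `e i` on the line
spanned by a bracket one of whose entries is `e j`, and an ideal absorbs such brackets. So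
membership of the basis vectors in the ideal propagates along the chain of a connection; the
second claim follows because the `e i` span `W`. -/

namespace ColorGLT

variable {F : Type} [Field F] {G : Type} [AddCommGroup G] [DecidableEq G]
    {L : Type} [AddCommGroup L] [Module F L] {n : ℕ} {A : ColorGLT F G L n}
    {S : Submodule F L}

theorem IsIdeal.bracket_mem_s18 (hS : A.IsIdeal S) {z : Fin (n + 2) → L} {t : Fin (n + 2)}
    (hz : z t ∈ S) : A.bracket z ∈ S := by
  have h := hS.2 (Equiv.swap 0 t) (fun s => z (Equiv.swap 0 t s)) (by simpa using hz)
  simpa using h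

end ColorGLT

namespace QMBasis

variable {F : Type} [Field F] {G : Type} [AddCommGroup G] [DecidableEq G]
    {L : Type} [AddCommGroup L] [Module F L] {n : ℕ} {I : Type}
    {A : ColorGLT F G L n} {B : QMBasis A I} {S : Submodule F L}

theorem uSet_map_some (j : I ⊕ I) :
    B.uSet (Sum.map some some j) = {B.e (Sum.elim id id j)} := by
  cases j <;> rfl

theorem e_mem_of_muMem (hmu : B.MuQM) (hS : A.IsIdeal S) {k : Option I ⊕ Option I}
    {X : Tup I n} {i : I} (hk : B.uSet k ⊆ S) (h : B.muMem k X (some i)) : B.e i ∈ S := by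
  obtain ⟨σ, z, hz, hi⟩ := hmu k X i h
  have hz0 : z (σ⁻¹ 0) ∈ S := hk (by simpa [fullTup] using hz (σ⁻¹ 0))
  exact (Submodule.span_singleton_le_iff_mem _ _).2 (hS.bracket_mem_s18 hz0) hi

theorem phi_subset (hmu : B.MuQM) (hS : A.IsIdeal S) {s : Set (I ⊕ I)}
    (hs : s ⊆ B.e ∘ Sum.elim id id ⁻¹' S) (X : Tup I n) :
    B.phi s X ⊆ B.e ∘ Sum.elim id id ⁻¹' S := by
  rintro p ⟨i, hp, j, hj, hmem⟩
  have hi : B.e i ∈ S :=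
    e_mem_of_muMem hmu hS (by simpa [uSet_map_some] using hs hj) hmem
  rcases hp with rfl | rfl <;> exact hi

theorem chain_subset (hmu : B.MuQM) (hS : A.IsIdeal S) (Xs : List (Tup I n))
    {s : Set (I ⊕ I)} (hs : s ⊆ B.e ∘ Sum.elim id id ⁻¹' S) :
    B.chain s Xs ⊆ B.e ∘ Sum.elim id id ⁻¹' S := by
  induction Xs generalizing s with
  | nil => exact hs
  | cons X Xs ih => exact ih (phi_subset hmu hS hs X)

theorem e_mem_of_connected (hmu : B.MuQM) (hS : A.IsIdeal S) {i₀ i : I}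
    (h₀ : B.e i₀ ∈ S) (hconn : B.Connected i₀ i) : B.e i ∈ S := by
  rcases hconn with rfl | ⟨Xs, st, -, hst, -, hi⟩
  · exact h₀
  · have hst : {st} ⊆ B.e ∘ Sum.elim id id ⁻¹' S := by
      rcases hst with rfl | rfl <;> simpa using h₀
    exact chain_subset hmu hS Xs hst hi

end QMBasis

theorem stmt18_general {F : Type} [Field F] {G : Type} [AddCommGroup G] [DecidableEq G]
    {L : Type} [AddCommGroup L] [Module F L] {n : ℕ} {I : Type}
    {A : ColorGLT F G L n} (B : QMBasis A I) (hmu : B.MuQM) (S : Submodule F L)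
    (hS : A.IsIdeal S) :
    (∀ i₀ i : I, B.e i₀ ∈ S → B.Connected i₀ i → B.e i ∈ S) ∧
    ((∀ i j : I, B.Connected i j) → (∃ i₀ : I, B.e i₀ ∈ S) → B.W ≤ S) := by
  refine ⟨fun i₀ i h₀ hconn => QMBasis.e_mem_of_connected hmu hS h₀ hconn, ?_⟩
  rintro hall ⟨i₀, h₀⟩
  rw [← B.e_span, Submodule.span_le]
  rintro _ ⟨i, rfl⟩
  exact QMBasis.e_mem_of_connected hmu hS h₀ (hall i₀ i)

theorem stmt18 {F : Type} [Field F] {G : Type} [AddCommGroup G] [DecidableEq G]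
    {L : Type} [AddCommGroup L] [Module F L] {n : ℕ} {I : Type}
    {A : ColorGLT F G L n} (B : QMBasis A I) (hmu : B.MuQM) (S : Submodule F L)
    (hS : A.IsIdeal S) (hne : S ≠ ⊥) (hinh : B.HasInheritedBasis S) :
    (∀ i₀ i : I, B.e i₀ ∈ S → B.Connected i₀ i → B.e i ∈ S) ∧
    ((∀ i j : I, B.Connected i j) → (∃ i₀ : I, B.e i₀ ∈ S) → B.W ≤ S) :=
  stmt18_general B hmu S hS
end
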